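/- Let ℓ_1 be the space of summable real sequences with standard unit vectors e_j, let k be an odd positive integer, and let (r_j)_{j∈ℕ} be a Rademacher family. Then the random variables η_j := r_j e_j have vanishing injective k-th moment, and for every q ∈ [1,∞) and M ∈ ℕ, ‖Σ_{j=1}^M ⊗^k η_j‖_{L_q(Ω; ⊗^{k,s}_{ε_s} ℓ_1)} = M, so the Monte Carlo estimate with exponent 1/p on the right-hand side cannot hold with any p > 1 in ℓ_1. -/

import Mathlib

open MeasureTheory ProbabilityTheory BigOperators
open scoped TensorProduct ENNReal

/-!
A Rademacher sign is symmetric, so its odd moments vanish, and then so does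
`E[f(r_j e_j)^k] = f(e_j)^k E[r_j^k]` for every functional `f`. On the other hand, the
injective norm of `∑_{j<M} ⊗^k (r_j e_j)` is at most `M` since `‖e_j‖ = 1`, and the sign
sequence `(r_j(ω))_{j<M}`, a norm-one element of `ℓ_∞ = ℓ₁*`, attains it. So the norm is `M`
for almost every `ω`, its `L_q` norm is `M`, and `M ≤ C M^{1/p}` fails for large `M` when `p > 1`.
-/

/-- the space ℓ₁ of summable real sequences -/
abbrev ellOne : Type := lp (fun _ : ℕ => ℝ) 1

noncomputable def tpair {k : ℕ} (f : Fin k → (ellOne →L[ℝ] ℝ)) :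
    (⨂[ℝ] _ : Fin k, ellOne) →ₗ[ℝ] ℝ :=
  PiTensorProduct.lift
    ((MultilinearMap.mkPiAlgebra ℝ (Fin k) ℝ).compLinearMap fun i => (f i).toLinearMap)

noncomputable def symInjNorm {k : ℕ} (U : ⨂[ℝ] _ : Fin k, ellOne) : ℝ :=
  sSup {r | ∃ f : ellOne →L[ℝ] ℝ, ‖f‖ ≤ 1 ∧ r = |tpair (fun _ => f) U|}

noncomputable def signFunctional (s : ℕ → ℝ) (hs : ∀ j, |s j| ≤ 1) (M : ℕ) :
    ellOne →L[ℝ] ℝ :=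
  LinearMap.mkContinuous
    { toFun := fun x => ∑ j ∈ Finset.range M, s j * x j
      map_add' := fun x y => by
        simp only [lp.coeFn_add, Pi.add_apply, mul_add, Finset.sum_add_distrib]
      map_smul' := fun c x => by
        simp only [lp.coeFn_smul, Pi.smul_apply, smul_eq_mul, RingHom.id_apply, Finset.mul_sum]
        exact Finset.sum_congr rfl fun _ _ => mul_left_comm _ _ _ }
    1 fun x => by
      have hx := lp.sum_rpow_le_norm_rpow (p := 1) (by norm_num) x (Finset.range M)
      simp only [ENNReal.toReal_one, Real.rpow_one, Real.norm_eq_abs] at hx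
      simp only [LinearMap.coe_mk, AddHom.coe_mk, one_mul, Real.norm_eq_abs]
      calc |∑ j ∈ Finset.range M, s j * x j| ≤ ∑ j ∈ Finset.range M, |s j * x j| :=
            Finset.abs_sum_le_sum_abs _ _
        _ ≤ ∑ j ∈ Finset.range M, |x j| := Finset.sum_le_sum fun j _ => by
            rw [abs_mul]; exact mul_le_of_le_one_left (abs_nonneg _) (hs j)
        _ ≤ ‖x‖ := hx

theorem norm_signFunctional_le (s : ℕ → ℝ) (hs : ∀ j, |s j| ≤ 1) (M : ℕ) :
    ‖signFunctional s hs M‖ ≤ 1 :=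
  LinearMap.mkContinuous_norm_le _ zero_le_one _

theorem signFunctional_single (s : ℕ → ℝ) (hs : ∀ j, |s j| ≤ 1) {M j : ℕ} (hj : j < M) :
    signFunctional s hs M (lp.single 1 j 1) = s j := by
  simp only [signFunctional, LinearMap.mkContinuous_apply, LinearMap.coe_mk, AddHom.coe_mk]
  rw [Finset.sum_eq_single_of_mem j (Finset.mem_range.2 hj) fun i _ hij => by
    rw [lp.single_apply_ne _ _ _ hij, mul_zero]]
  rw [lp.single_apply_self, mul_one]

theorem tpair_sum_tprod {k : ℕ} {ι : Type*} [Fintype ι] (f : ellOne →L[ℝ] ℝ) (w : ι → ellOne) :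
    tpair (fun _ => f) (∑ j, ⨂ₜ[ℝ] _ : Fin k, w j) = ∑ j, f (w j) ^ k := by
  simp [tpair, PiTensorProduct.lift.tprod, Finset.prod_const]

theorem abs_tpair_sum_tprod_le {k : ℕ} {ι : Type*} [Fintype ι] {f : ellOne →L[ℝ] ℝ}
    (hf : ‖f‖ ≤ 1) {w : ι → ellOne} (hw : ∀ j, ‖w j‖ ≤ 1) :
    |tpair (fun _ => f) (∑ j, ⨂ₜ[ℝ] _ : Fin k, w j)| ≤ Fintype.card ι := by
  rw [tpair_sum_tprod]
  calc |∑ j, f (w j) ^ k| ≤ ∑ j, |f (w j)| ^ k := by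
        simpa only [abs_pow] using Finset.abs_sum_le_sum_abs (fun j => f (w j) ^ k) Finset.univ
    _ ≤ ∑ _j : ι, (1 : ℝ) := Finset.sum_le_sum fun j _ =>
        pow_le_one₀ (abs_nonneg _)
          ((f.le_opNorm (w j)).trans (mul_le_one₀ hf (norm_nonneg _) (hw j)))
    _ = Fintype.card ι := by simp

theorem symInjNorm_sum_tprod_sign_smul_single {k : ℕ} (M : ℕ) (v : ℕ → ℝ)
    (hv : ∀ j, v j = 1 ∨ v j = -1) :
    symInjNorm (∑ j : Fin M, ⨂ₜ[ℝ] _ : Fin k, v j • (lp.single 1 (j : ℕ) (1 : ℝ) : ellOne))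
      = M := by
  have hv_abs : ∀ j, |v j| = 1 := fun j => by rcases hv j with h | h <;> simp [h]
  have hv_le : ∀ j, |v j| ≤ 1 := fun j => (hv_abs j).le
  have hw : ∀ j : Fin M, ‖v j • (lp.single 1 (j : ℕ) (1 : ℝ) : ellOne)‖ ≤ 1 := fun j => by
    rw [norm_smul, lp.norm_single (by norm_num), Real.norm_eq_abs, hv_abs]; simp
  have hbound : ∀ x ∈ {r | ∃ f : ellOne →L[ℝ] ℝ, ‖f‖ ≤ 1 ∧ r = |tpair (fun _ => f)
      (∑ j : Fin M, ⨂ₜ[ℝ] _ : Fin k, v j • (lp.single 1 (j : ℕ) (1 : ℝ) : ellOne))|}, x ≤ M := by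
    rintro x ⟨f, hf, rfl⟩
    simpa using abs_tpair_sum_tprod_le (k := k) hf hw
  refine le_antisymm (Real.sSup_le hbound M.cast_nonneg) (le_csSup ⟨M, hbound⟩ ?_)
  refine ⟨signFunctional v hv_le M, norm_signFunctional_le v hv_le M, ?_⟩
  have hsq : ∀ j : Fin M, signFunctional v hv_le M (v j • lp.single 1 (j : ℕ) 1) ^ k = 1 :=
    fun j => by
      rw [map_smul, signFunctional_single v hv_le j.isLt, smul_eq_mul, ← sq, ← sq_abs,
        hv_abs, one_pow, one_pow]
  rw [tpair_sum_tprod, Finset.sum_congr rfl fun j _ => hsq j]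
  simp

theorem integral_eq_zero_of_symmetric_sign {Ω : Type*} [MeasurableSpace Ω] {μ : Measure Ω}
    [IsProbabilityMeasure μ] {r : Ω → ℝ} (hr_meas : Measurable r)
    (hr_val : ∀ᵐ ω ∂μ, r ω = 1 ∨ r ω = -1) (hr_half : μ {ω | r ω = 1} = 1 / 2) :
    ∫ ω, r ω ∂μ = 0 := by
  set A : Set Ω := {ω | r ω = 1}
  have hA : MeasurableSet A := hr_meas (measurableSet_singleton 1)
  have hr_eq : r =ᵐ[μ] fun ω => 2 * A.indicator 1 ω - 1 := by
    filter_upwards [hr_val] with ω hω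
    rcases hω with h | h
    · rw [Set.indicator_of_mem (show ω ∈ A from h), h]; norm_num
    · rw [Set.indicator_of_notMem (show ω ∉ A by norm_num [A, h]), h]; norm_num
  rw [integral_congr_ae hr_eq, integral_sub ((integrable_indicator_iff hA).2
      (integrable_const 1).integrableOn |>.const_mul 2) (integrable_const 1),
    integral_const_mul, integral_indicator_one hA, measureReal_def, hr_half]
  simp

theorem integral_sign_mul_pow_odd {Ω : Type*} [MeasurableSpace Ω] {μ : Measure Ω}
    [IsProbabilityMeasure μ] {k : ℕ} (hk : Odd k) {r : Ω → ℝ} (hr_meas : Measurable r)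
    (hr_val : ∀ᵐ ω ∂μ, r ω = 1 ∨ r ω = -1) (hr_half : μ {ω | r ω = 1} = 1 / 2) (c : ℝ) :
    ∫ ω, (r ω * c) ^ k ∂μ = 0 := by
  have hpow : (fun ω => (r ω * c) ^ k) =ᵐ[μ] fun ω => c ^ k * r ω := by
    filter_upwards [hr_val] with ω hω
    rcases hω with h | h <;> simp [h, hk.neg_pow, mul_comm]
  rw [integral_congr_ae hpow, integral_const_mul,
    integral_eq_zero_of_symmetric_sign hr_meas hr_val hr_half, mul_zero]

theorem not_exists_le_mul_rpow_of_lt_one {a : ℝ} (ha : a < 1) :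
    ¬ ∃ C : ℝ, ∀ M : ℕ, (M : ℝ) ≤ C * (M : ℝ) ^ a := by
  rintro ⟨C, hC⟩
  have hgrow : Filter.Tendsto (fun n : ℕ => (n : ℝ) ^ (1 - a)) Filter.atTop Filter.atTop :=
    (tendsto_rpow_atTop (sub_pos.2 ha)).comp tendsto_natCast_atTop_atTop
  obtain ⟨M, hCM, hM⟩ :=
    ((hgrow.eventually_gt_atTop C).and (Filter.eventually_gt_atTop 0)).exists
  have hM_pos : (0 : ℝ) < M := by exact_mod_cast hM
  have : C * (M : ℝ) ^ a < M := by
    calc C * (M : ℝ) ^ a < (M : ℝ) ^ (1 - a) * (M : ℝ) ^ a :=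
          mul_lt_mul_of_pos_right hCM (Real.rpow_pos_of_pos hM_pos a)
      _ = M := by rw [← Real.rpow_add hM_pos, sub_add_cancel, Real.rpow_one]
  exact (hC M).not_gt this

theorem ellOne_counterexample_general
    {Ω : Type*} [MeasurableSpace Ω] (μ : Measure Ω) [IsProbabilityMeasure μ]
    (k : ℕ) (hk : Odd k)
    (r : ℕ → Ω → ℝ)
    (hr_meas : ∀ j, Measurable (r j))
    (hr_val : ∀ j, ∀ᵐ ω ∂μ, r j ω = 1 ∨ r j ω = -1)
    (hr_half : ∀ j, μ {ω | r j ω = 1} = 1/2)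
    (e : ℕ → ellOne) (he : ∀ j, e j = lp.single 1 j (1 : ℝ))
    (η : ℕ → Ω → ellOne) (hη : ∀ j ω, η j ω = r j ω • e j) :
    -- (a) vanishing injective k-th moments:
    (∀ j, ∀ f : ellOne →L[ℝ] ℝ, ∫ ω, (f (η j ω)) ^ k ∂μ = 0) ∧
    -- (b) the L_q norm of the Monte Carlo sum equals M:
    (∀ q : ℝ, 1 ≤ q → ∀ M : ℕ,
      (∫ ω, (symInjNorm (∑ j : Fin M, ⨂ₜ[ℝ] _ : Fin k, η j ω)) ^ q ∂μ) ^ (1/q)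
        = M) ∧
    -- (c) hence no estimate of order M^{1/p} with p > 1 is possible:
    (∀ p : ℝ, 1 < p → ¬ ∃ C : ℝ, ∀ M : ℕ, (M : ℝ) ≤ C * (M : ℝ) ^ (1/p)) := by
  refine ⟨fun j f => ?_, fun q hq M => ?_, fun p hp =>
    not_exists_le_mul_rpow_of_lt_one ((div_lt_one (by linarith)).2 hp)⟩
  · simp only [hη, map_smul, smul_eq_mul]
    exact integral_sign_mul_pow_odd hk (hr_meas j) (hr_val j) (hr_half j) _
  · have hnorm : (fun ω => symInjNorm (∑ j : Fin M, ⨂ₜ[ℝ] _ : Fin k, η j ω) ^ q) =ᵐ[μ]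
        fun _ => (M : ℝ) ^ q := by
      filter_upwards [ae_all_iff.2 hr_val] with ω hω
      simp only [hη, he, symInjNorm_sum_tprod_sign_smul_single M (r · ω) hω]
    rw [integral_congr_ae hnorm, integral_const, probReal_univ, one_smul,
      ← Real.rpow_mul M.cast_nonneg, mul_one_div_cancel (by linarith), Real.rpow_one]

/-- **The Monte Carlo rate cannot be improved beyond `p = 1` in ℓ₁.**
For an odd `k`, a Rademacher family `(r_j)_{j∈ℕ}` and `η_j := r_j e_j` with the
standard unit vectors `e_j` of ℓ₁: the `η_j` have vanishing injective `k`-th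
moment, `‖Σ_{j=1}^M ⊗^k η_j‖_{L_q(Ω;⊗^{k,s}_{ε_s}ℓ₁)} = M` for every
`q ∈ [1,∞)` and `M`, and hence no bound of order `M^{1/p}` with `p > 1` can hold. -/
theorem ellOne_counterexample
    {Ω : Type*} [MeasurableSpace Ω] (μ : Measure Ω) [IsProbabilityMeasure μ]
    (k : ℕ) (hk : Odd k) (hk1 : 1 ≤ k)
    (r : ℕ → Ω → ℝ)
    (hr_meas : ∀ j, Measurable (r j))
    (hr_val : ∀ j, ∀ᵐ ω ∂μ, r j ω = 1 ∨ r j ω = -1)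
    (hr_half : ∀ j, μ {ω | r j ω = 1} = 1/2)
    (hr_indep : iIndepFun r μ)
    (e : ℕ → ellOne) (he : ∀ j, e j = lp.single 1 j (1 : ℝ))
    (η : ℕ → Ω → ellOne) (hη : ∀ j ω, η j ω = r j ω • e j) :
    -- (a) vanishing injective k-th moments:
    (∀ j, ∀ f : ellOne →L[ℝ] ℝ, ∫ ω, (f (η j ω)) ^ k ∂μ = 0) ∧
    -- (b) the L_q norm of the Monte Carlo sum equals M:
    (∀ q : ℝ, 1 ≤ q → ∀ M : ℕ,
      (∫ ω, (symInjNorm (∑ j : Fin M, ⨂ₜ[ℝ] _ : Fin k, η j ω)) ^ q ∂μ) ^ (1/q)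
        = M) ∧
    -- (c) hence no estimate of order M^{1/p} with p > 1 is possible:
    (∀ p : ℝ, 1 < p → ¬ ∃ C : ℝ, ∀ M : ℕ, (M : ℝ) ≤ C * (M : ℝ) ^ (1/p)) :=
  ellOne_counterexample_general μ k hk r hr_meas hr_val hr_half e he η hη
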